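/- Let λ be an ℓ-partition of r and let w_{[λ]} ∈ S_r be defined by (a_{i−1}+l) w_{[λ]} = r − a_i + l for all i with a_{i−1} < a_i and 1 ≤ l ≤ a_i − a_{i−1}, where a_i = Σ_{j≤i} |λ^{(j)}|. Then w_λ = w_{(1)} · w_{(2)} ⋯ w_{(ℓ)} · w_{[λ]} with all lengths adding (ℓ(w_λ) = Σ ℓ(w_{(i)}) + ℓ(w_{[λ]})), where w_{(i)} is the permutation taking the i-th component of t^λ to the i-th component of t^λ w_{[λ]}^{-1}. -/

import Mathlib

/-!
Cut `Fin r` into the consecutive blocks `[a_c, a_{c+1})` of the components of `λ`. Each `w_{(c)}`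
is supported on block `c`, and `w_λ` sends the cell of component `c` that `w_{(c)}` moves to
position `a_c + x` to position `r - a_{c+1} + x`, i.e. to the same place of the mirrored block;
so `w_λ = w_{[λ]} ∘ ∏ w_{(c)}`. An inversion of `w_λ` inside a block, where `w_{[λ]}` is
increasing, is an inversion of exactly one `w_{(c)}`; a pair from two different blocks is kept in
order by every `w_{(c)}` and reversed by `w_{[λ]}`. Hence the lengths add.
-/

noncomputable section

open scoped BigOperators

/-- Partial sum `l 0 + ⋯ + l (i-1)` of the parts of a composition. -/
def psum (l : ℕ → ℕ) (i : ℕ) : ℕ := ∑ j ∈ Finset.range i, l j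

/-- `l : ℕ → ℕ` represents a composition of `r` (positive parts, padded by zeros). -/
def IsCompositionOf (r : ℕ) (l : ℕ → ℕ) : Prop :=
  (∃ k, k ≤ r ∧ (∀ j, j < k → 0 < l j) ∧ (∀ j, k ≤ j → l j = 0)) ∧ psum l r = r

/-- `l : ℕ → ℕ` represents a partition of `r`. -/
def IsPartitionOf (r : ℕ) (l : ℕ → ℕ) : Prop :=
  IsCompositionOf r l ∧ ∀ i j, i ≤ j → l j ≤ l i

/-- The conjugate (dual) partition of a composition of `r`:
`(conjC r m) j = #{k : m k ≥ j+1}` (0-indexed). -/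
def conjC (r : ℕ) (m : ℕ → ℕ) : ℕ → ℕ := fun j =>
  ((Finset.range r).filter (fun k => j + 1 ≤ m k)).card

open scoped Classical in
/-- The Young subgroup `S_l ≤ S_r` of a composition `l` of `r`, i.e. the permutations
preserving each of the consecutive blocks of sizes `l 0, l 1, …` (this is the row
stabilizer of the row-reading tableau of `l`), as a finset. -/
def youngFinset (r : ℕ) (l : ℕ → ℕ) : Finset (Equiv.Perm (Fin r)) :=
  Finset.univ.filter (fun w => ∀ (p : Fin r) (i : ℕ),
    psum l i ≤ (p : ℕ) → (p : ℕ) < psum l (i + 1) →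
      psum l i ≤ (w p : ℕ) ∧ (w p : ℕ) < psum l (i + 1))

/-- The number of inversions of a permutation of `Fin r`; this equals its Coxeter
length with respect to the simple transpositions. -/
def len (r : ℕ) (w : Equiv.Perm (Fin r)) : ℕ :=
  (Finset.univ.filter (fun p : Fin r × Fin r => p.1 < p.2 ∧ w p.2 < w p.1)).card

/-- `x_l = ∑_{w ∈ S_l} w` in the group algebra `ℂ[S_r]`. -/
def xElt (r : ℕ) (l : ℕ → ℕ) : MonoidAlgebra ℂ (Equiv.Perm (Fin r)) :=
  ∑ w ∈ youngFinset r l, MonoidAlgebra.of ℂ (Equiv.Perm (Fin r)) w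

/-- `y_l = ∑_{w ∈ S_l} (-1)^{ℓ(w)} w` in the group algebra `ℂ[S_r]`. -/
def yElt (r : ℕ) (l : ℕ → ℕ) : MonoidAlgebra ℂ (Equiv.Perm (Fin r)) :=
  ∑ w ∈ youngFinset r l, ((-1 : ℂ) ^ len r w) • MonoidAlgebra.of ℂ (Equiv.Perm (Fin r)) w

/-- `l : ℕ → ℕ → ℕ` represents an `L`-multipartition of `r`: `l c` is the `c`-th
component partition (components and rows padded by zeros). -/
def IsMultipartitionOf (L r : ℕ) (l : ℕ → ℕ → ℕ) : Prop :=
  (∀ c, L ≤ c → ∀ i, l c i = 0) ∧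
  (∀ c i j, i ≤ j → l c j ≤ l c i) ∧
  (∀ c i, r ≤ i → l c i = 0) ∧
  (∑ c ∈ Finset.range L, psum (l c) r) = r

/-- `asum r l i` is the total number of boxes in the first `i` components. -/
def asum (r : ℕ) (l : ℕ → ℕ → ℕ) (i : ℕ) : ℕ := ∑ c ∈ Finset.range i, psum (l c) r

/-- The (0-indexed) row-reading index of the cell in row `a`, column `b` of component `c`
of the multipartition `l`; this is the entry of the maximal standard tableau `t^λ` at
that cell. -/
def rowIdxMP (r : ℕ) (l : ℕ → ℕ → ℕ) (c a b : ℕ) : ℕ := asum r l c + psum (l c) a + b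

/-- The conjugate (dual) of an `L`-multipartition of `r`: component `c` of the dual is
the conjugate of component `L-1-c`. -/
def conjMP (L r : ℕ) (l : ℕ → ℕ → ℕ) : ℕ → ℕ → ℕ := fun c =>
  if c < L then conjC r (l (L - 1 - c)) else fun _ => 0

/-- `d : S_r` encodes the standard `λ`-tableau `t = t^λ d` (whose entry at a cell is `d`
applied to the row-reading index of the cell): entries increase along rows and down
columns of every component. -/
def IsStdMP (r : ℕ) (l : ℕ → ℕ → ℕ) (d : Equiv.Perm (Fin r)) : Prop :=
  (∀ c a b, b + 1 < l c a →
    ∀ (h1 : rowIdxMP r l c a b < r) (h2 : rowIdxMP r l c a (b + 1) < r),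
      d ⟨rowIdxMP r l c a b, h1⟩ < d ⟨rowIdxMP r l c a (b + 1), h2⟩) ∧
  (∀ c a b, b < l c (a + 1) →
    ∀ (h1 : rowIdxMP r l c a b < r) (h2 : rowIdxMP r l c (a + 1) b < r),
      d ⟨rowIdxMP r l c a b, h1⟩ < d ⟨rowIdxMP r l c (a + 1) b, h2⟩)

def inversionSet (r : ℕ) (w : Equiv.Perm (Fin r)) : Finset (Fin r × Fin r) :=
  Finset.univ.filter (fun p : Fin r × Fin r => p.1 < p.2 ∧ w p.2 < w p.1)

lemma len_eq_card_inversionSet (r : ℕ) (w : Equiv.Perm (Fin r)) :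
    len r w = (inversionSet r w).card := rfl

lemma mem_inversionSet {r : ℕ} {w : Equiv.Perm (Fin r)} {p q : Fin r} :
    (p, q) ∈ inversionSet r w ↔ p < q ∧ w q < w p := by
  simp [inversionSet]

section Blockwise

variable {r : ℕ} {blk : Fin r → ℕ}

lemma blk_eq_of_mem_inversionSet (hblk : Monotone blk) {σ : Equiv.Perm (Fin r)}
    (hσ : ∀ p, blk (σ p) = blk p) {p q : Fin r} (h : (p, q) ∈ inversionSet r σ) :
    blk p = blk q := by
  rw [mem_inversionSet] at h
  exact le_antisymm (hblk h.1.le) (by simpa only [hσ] using hblk h.2.le)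

lemma lt_iff_lt_of_blk_eq {w : Equiv.Perm (Fin r)}
    (hw : ∀ p q, p < q → (w q < w p ↔ blk p ≠ blk q)) {x y : Fin r} (h : blk x = blk y) :
    w y < w x ↔ y < x := by
  rcases lt_trichotomy x y with hxy | rfl | hxy
  · simp [(hw x y hxy).not.2 (not_not.2 h), hxy.not_gt]
  · simp
  · have hne : w x ≠ w y := w.injective.ne hxy.ne'
    simp [hxy, lt_of_le_of_ne (not_lt.1 ((hw y x hxy).not.2 (not_not.2 h.symm))) hne.symm]

lemma len_mul_of_blockwise (hblk : Monotone blk) {σ w : Equiv.Perm (Fin r)}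
    (hσ : ∀ p, blk (σ p) = blk p) (hw : ∀ p q, p < q → (w q < w p ↔ blk p ≠ blk q)) :
    len r (w * σ) = len r σ + len r w := by
  have hsplit : inversionSet r (w * σ) = inversionSet r σ ∪ inversionSet r w := by
    ext ⟨p, q⟩
    simp only [Finset.mem_union, mem_inversionSet, Equiv.Perm.mul_apply]
    by_cases hpq : p < q
    · by_cases hb : blk p = blk q
      · have hσb : blk (σ p) = blk (σ q) := by rw [hσ, hσ, hb]
        simp [hpq, hw p q hpq, hb, lt_iff_lt_of_blk_eq hw hσb]
      · have hlt : σ p < σ q := hblk.reflect_lt (by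
          rw [hσ, hσ]; exact lt_of_le_of_ne (hblk hpq.le) hb)
        simp [hpq, (hw p q hpq).2 hb, (hw _ _ hlt).2 (by rwa [hσ, hσ])]
    · simp [hpq]
  have hdisj : Disjoint (inversionSet r σ) (inversionSet r w) := by
    refine Finset.disjoint_left.2 fun ⟨p, q⟩ hσpq hwpq => ?_
    rw [mem_inversionSet] at hwpq
    exact (hw p q hwpq.1).1 hwpq.2 (blk_eq_of_mem_inversionSet hblk hσ hσpq)
  rw [len_eq_card_inversionSet, hsplit, Finset.card_union_of_disjoint hdisj,
    len_eq_card_inversionSet, len_eq_card_inversionSet]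

variable {τ : ℕ → Equiv.Perm (Fin r)}

lemma blk_eq_of_mem_inversionSet_of_fix (hblk : Monotone blk) (hτ : ∀ c p, blk (τ c p) = blk p)
    (hfix : ∀ c p, blk p ≠ c → τ c p = p) {c : ℕ} {p q : Fin r}
    (h : (p, q) ∈ inversionSet r (τ c)) : blk p = c := by
  have hpq := blk_eq_of_mem_inversionSet hblk (hτ c) h
  by_contra hne
  rw [mem_inversionSet, hfix c p hne, hfix c q (hpq ▸ hne)] at h
  exact lt_asymm h.1 h.2

lemma len_eq_sum_of_blockwise (hblk : Monotone blk) {L : ℕ} (hL : ∀ p, blk p < L)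
    (hτ : ∀ c p, blk (τ c p) = blk p) (hfix : ∀ c p, blk p ≠ c → τ c p = p)
    {σ : Equiv.Perm (Fin r)} (hσ : ∀ p, σ p = τ (blk p) p) :
    len r σ = ∑ c ∈ Finset.range L, len r (τ c) := by
  have hσblk : ∀ p, blk (σ p) = blk p := fun p => (hσ p).symm ▸ hτ _ p
  have hsplit : inversionSet r σ = (Finset.range L).biUnion fun c => inversionSet r (τ c) := by
    ext ⟨p, q⟩
    simp only [Finset.mem_biUnion, Finset.mem_range]
    constructor
    · intro h
      have hpq := blk_eq_of_mem_inversionSet hblk hσblk h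
      rw [mem_inversionSet, hσ, hσ, ← hpq] at h
      exact ⟨blk p, hL p, mem_inversionSet.2 h⟩
    · rintro ⟨c, -, h⟩
      have hp := blk_eq_of_mem_inversionSet_of_fix hblk hτ hfix h
      have hq := (blk_eq_of_mem_inversionSet hblk (hτ c) h).symm.trans hp
      rw [mem_inversionSet] at h ⊢
      rwa [hσ, hσ, hp, hq]
  rw [len_eq_card_inversionSet, hsplit, Finset.card_biUnion]
  · rfl
  · intro c _ d _ hcd
    refine Finset.disjoint_left.2 fun ⟨p, q⟩ hc hd => hcd ?_
    exact (blk_eq_of_mem_inversionSet_of_fix hblk hτ hfix hc).symm.trans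
      (blk_eq_of_mem_inversionSet_of_fix hblk hτ hfix hd)

lemma list_prod_map_apply_of_blockwise (hτ : ∀ c p, blk (τ c p) = blk p)
    (hfix : ∀ c p, blk p ≠ c → τ c p = p) {s : List ℕ} (hs : s.Nodup) (p : Fin r) :
    (s.map τ).prod p = if blk p ∈ s then τ (blk p) p else p := by
  induction s with
  | nil => simp
  | cons j t ih =>
    rw [List.nodup_cons] at hs
    rw [List.map_cons, List.prod_cons, Equiv.Perm.mul_apply, ih hs.2]
    by_cases ht : blk p ∈ t
    · have hj : blk (τ (blk p) p) ≠ j := fun h => hs.1 (h ▸ (hτ _ p).symm ▸ ht)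
      rw [if_pos ht, if_pos (List.mem_cons_of_mem j ht), hfix j _ hj]
    · by_cases hj : blk p = j
      · subst hj
        simp [ht]
      · simp [ht, hj, hfix j p hj]

theorem eq_mul_prod_and_len_of_blockwise (hblk : Monotone blk) {L : ℕ} (hL : ∀ p, blk p < L)
    (hτ : ∀ c p, blk (τ c p) = blk p) (hfix : ∀ c p, blk p ≠ c → τ c p = p)
    {w v : Equiv.Perm (Fin r)} (hw : ∀ p q, p < q → (w q < w p ↔ blk p ≠ blk q))
    (hv : ∀ p, v p = w (τ (blk p) p)) :
    v = w * ((List.range L).reverse.map τ).prod ∧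
      len r v = (∑ c ∈ Finset.range L, len r (τ c)) + len r w := by
  have hprod : ∀ p, ((List.range L).reverse.map τ).prod p = τ (blk p) p := fun p => by
    rw [list_prod_map_apply_of_blockwise hτ hfix (List.nodup_reverse.2 List.nodup_range) p,
      if_pos (by simpa using hL p)]
  have hfact : v = w * ((List.range L).reverse.map τ).prod :=
    Equiv.ext fun p => by rw [Equiv.Perm.mul_apply, hprod, hv]
  refine ⟨hfact, ?_⟩
  rw [hfact, len_mul_of_blockwise hblk (fun p => by rw [hprod, hτ]) hw,
    len_eq_sum_of_blockwise hblk hL hτ hfix hprod]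

end Blockwise

section Psum

variable (f : ℕ → ℕ)

lemma psum_succ (i : ℕ) : psum f (i + 1) = psum f i + f i :=
  Finset.sum_range_succ f i

lemma psum_monotone : Monotone (psum f) := fun _ _ h =>
  Finset.sum_le_sum_of_subset (Finset.range_subset_range.2 h)

lemma exists_psum_le_lt {x n : ℕ} (h : x < psum f n) :
    ∃ i < n, psum f i ≤ x ∧ x < psum f (i + 1) := by
  induction n with
  | zero => simp [psum] at h
  | succ n ih =>
    by_cases hx : x < psum f n
    · obtain ⟨i, hi, h1, h2⟩ := ih hx
      exact ⟨i, by omega, h1, h2⟩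
    · exact ⟨n, by omega, by omega, h⟩

/-- Index of the block `[psum f c, psum f (c + 1))` containing `p`, among the first `L`. -/
def blockOf (L p : ℕ) : ℕ := ((Finset.range L).filter fun i => psum f (i + 1) ≤ p).card

lemma blockOf_monotone (L : ℕ) : Monotone (blockOf f L) := fun _ _ h =>
  Finset.card_le_card (Finset.monotone_filter_right _ fun _ _ hi => hi.trans h)

variable {f} {L : ℕ}

lemma blockOf_eq_of_mem {c p : ℕ} (hc : c < L) (h1 : psum f c ≤ p) (h2 : p < psum f (c + 1)) :
    blockOf f L p = c := by
  have hfilter : (Finset.range L).filter (fun i => psum f (i + 1) ≤ p) = Finset.range c := by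
    ext i
    simp only [Finset.mem_filter, Finset.mem_range]
    constructor
    · rintro ⟨-, hi⟩
      by_contra hic
      have := psum_monotone f (show c + 1 ≤ i + 1 by omega)
      omega
    · intro hic
      exact ⟨by omega, (psum_monotone f (show i + 1 ≤ c by omega)).trans h1⟩
  rw [blockOf, hfilter, Finset.card_range]

lemma blockOf_eq_iff {c p : ℕ} (hp : p < psum f L) :
    blockOf f L p = c ↔ psum f c ≤ p ∧ p < psum f (c + 1) := by
  constructor
  · rintro rfl
    obtain ⟨i, hi, h1, h2⟩ := exists_psum_le_lt f hp
    rw [blockOf_eq_of_mem hi h1 h2]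
    exact ⟨h1, h2⟩
  · rintro ⟨h1, h2⟩
    have hc : c < L := by
      by_contra hc
      have := psum_monotone f (not_lt.1 hc)
      omega
    exact blockOf_eq_of_mem hc h1 h2

lemma blockOf_lt {p : ℕ} (hp : p < psum f L) : blockOf f L p < L := by
  obtain ⟨i, hi, h1, h2⟩ := exists_psum_le_lt f hp
  rwa [blockOf_eq_of_mem hi h1 h2]

lemma mem_blockOf {p : ℕ} (hp : p < psum f L) :
    psum f (blockOf f L p) ≤ p ∧ p < psum f (blockOf f L p + 1) :=
  (blockOf_eq_iff hp).1 rfl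

lemma lt_iff_blockOf_ne_of_blockReversal {r : ℕ} (hfL : psum f L = r) {w : Equiv.Perm (Fin r)}
    (hw : ∀ p : Fin r,
      (w p : ℕ) = r - psum f (blockOf f L p + 1) + (p - psum f (blockOf f L p)))
    {p q : Fin r} (hpq : p < q) : w q < w p ↔ blockOf f L p ≠ blockOf f L q := by
  have hbound : ∀ x : Fin r, (x : ℕ) < psum f L := fun x => hfL ▸ x.2
  have hp := mem_blockOf (hbound p)
  have hq := mem_blockOf (hbound q)
  have hpq' : (p : ℕ) < q := hpq
  rw [Fin.lt_def, hw p, hw q]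
  rcases (blockOf_monotone f L hpq.le).lt_or_eq with hlt | heq
  · have hmid := psum_monotone f (show blockOf f L p + 1 ≤ blockOf f L q by omega)
    have hend := psum_monotone f (show blockOf f L q + 1 ≤ L from blockOf_lt (hbound q))
    simp only [ne_eq, hlt.ne, not_false_eq_true, iff_true]
    omega
  · rw [heq] at hp ⊢
    simp only [ne_eq, not_true_eq_false, iff_false]
    omega

end Psum

lemma psum_conjC (r : ℕ) (m : ℕ → ℕ) (hm : ∀ k < r, m k ≤ r) :
    psum (conjC r m) r = psum m r := by
  unfold psum conjC
  simp only [Finset.card_filter]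
  rw [Finset.sum_comm]
  refine Finset.sum_congr rfl fun k hk => ?_
  rw [Finset.mem_range] at hk
  have hcol : (Finset.range r).filter (fun j => j + 1 ≤ m k) = Finset.range (m k) := by
    ext j
    simp only [Finset.mem_filter, Finset.mem_range]
    have := hm k hk
    omega
  rw [← Finset.card_filter, hcol, Finset.card_range]

lemma lt_conjC_of_lt {r : ℕ} {m : ℕ → ℕ} (hm : Antitone m) {a b : ℕ} (ha : a < r)
    (hb : b < m a) : a < conjC r m b := by
  have hsub : Finset.range (a + 1) ⊆ (Finset.range r).filter fun k => b + 1 ≤ m k := by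
    intro k hk
    simp only [Finset.mem_range, Finset.mem_filter] at hk ⊢
    have := hm (show k ≤ a by omega)
    omega
  have := Finset.card_le_card hsub
  rw [Finset.card_range] at this
  exact this

lemma asum_eq_psum (r : ℕ) (l : ℕ → ℕ → ℕ) : asum r l = psum fun c => psum (l c) r :=
  rfl

lemma asum_succ (r : ℕ) (l : ℕ → ℕ → ℕ) (i : ℕ) :
    asum r l (i + 1) = asum r l i + psum (l i) r :=
  Finset.sum_range_succ _ i

lemma exists_rowIdxMP_eq {r c p : ℕ} {l : ℕ → ℕ → ℕ} (h1 : asum r l c ≤ p)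
    (h2 : p < asum r l (c + 1)) : ∃ a b, b < l c a ∧ p = rowIdxMP r l c a b := by
  rw [asum_succ] at h2
  obtain ⟨a, -, ha1, ha2⟩ :=
    exists_psum_le_lt (l c) (show p - asum r l c < psum (l c) r by omega)
  rw [psum_succ] at ha2
  exact ⟨a, p - asum r l c - psum (l c) a, by omega, by rw [rowIdxMP]; omega⟩

namespace IsMultipartitionOf

variable {L r : ℕ} {l : ℕ → ℕ → ℕ}

lemma asum_self (hmp : IsMultipartitionOf L r l) : asum r l L = r := hmp.2.2.2

lemma asum_le (hmp : IsMultipartitionOf L r l) (i : ℕ) : asum r l i ≤ r := by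
  rcases le_total i L with hi | hi
  · exact (psum_monotone (fun c => psum (l c) r) hi).trans_eq hmp.asum_self
  · refine (Finset.sum_subset (Finset.range_subset_range.2 hi) fun c _ hc => ?_).symm.trans_le
      hmp.asum_self.le
    exact Finset.sum_eq_zero fun k _ => hmp.1 c (not_lt.1 (Finset.mem_range.not.1 hc)) k

lemma part_le (hmp : IsMultipartitionOf L r l) (c k : ℕ) : l c k ≤ r := by
  by_cases hk : k < r
  · calc l c k ≤ psum (l c) r := Finset.single_le_sum (fun _ _ => Nat.zero_le _)
          (Finset.mem_range.2 hk)
      _ ≤ asum r l (c + 1) := by rw [asum_eq_psum, psum_succ]; omega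
      _ ≤ r := hmp.asum_le _
  · rw [hmp.2.2.1 c k (not_lt.1 hk)]
    exact Nat.zero_le r

lemma asum_conjMP (hmp : IsMultipartitionOf L r l) {i : ℕ} (hi : i ≤ L) :
    asum r (conjMP L r l) i = r - asum r l (L - i) := by
  induction i with
  | zero => rw [Nat.sub_zero, hmp.asum_self, Nat.sub_self]; rfl
  | succ i ih =>
    have hcomp : conjMP L r l i = conjC r (l (L - 1 - i)) := if_pos (by omega)
    have hsplit := psum_succ (fun c => psum (l c) r) (L - 1 - i)
    rw [show L - 1 - i + 1 = L - i by omega, ← asum_eq_psum] at hsplit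
    have hle := hmp.asum_le (L - i)
    rw [asum_eq_psum, psum_succ, ← asum_eq_psum, ih (by omega), hcomp,
      psum_conjC r (l _) fun k _ => hmp.part_le _ k, show L - (i + 1) = L - 1 - i by omega]
    omega

lemma psum_conjC_add_lt (hmp : IsMultipartitionOf L r l) {c a b : ℕ} (hb : b < l c a) :
    psum (conjC r (l c)) b + a < psum (l c) r := by
  have ha : a < r := by
    by_contra ha
    rw [hmp.2.2.1 c a (not_lt.1 ha)] at hb
    omega
  have hcol := lt_conjC_of_lt (m := l c) (fun _ _ h => hmp.2.1 c _ _ h) ha hb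
  have hb' : b + 1 ≤ r := by have := hmp.part_le c a; omega
  have := psum_monotone (conjC r (l c)) hb'
  rw [psum_succ, psum_conjC r _ fun k _ => hmp.part_le c k] at this
  omega

lemma rowIdxMP_conjMP (hmp : IsMultipartitionOf L r l) {c : ℕ} (hc : c < L) (a b : ℕ) :
    rowIdxMP r (conjMP L r l) (L - 1 - c) b a =
      r - asum r l (c + 1) + (psum (conjC r (l c)) b + a) := by
  have hcomp : conjMP L r l (L - 1 - c) = conjC r (l c) := by
    rw [conjMP, if_pos (by omega), show L - 1 - (L - 1 - c) = c by omega]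
  have hle := hmp.asum_le (c + 1)
  rw [rowIdxMP, hmp.asum_conjMP (by omega), hcomp, show L - (L - 1 - c) = c + 1 by omega]
  omega

/-- `x` is the column-reading position of the cell `p` inside its component `c`. -/
lemma exists_colPos_of_mem_block (hmp : IsMultipartitionOf L r l) {wlam : Equiv.Perm (Fin r)}
    {wi : ℕ → Equiv.Perm (Fin r)}
    (hwlam : ∀ c a b, b < l c a →
      ∀ (h1 : rowIdxMP r l c a b < r) (h2 : rowIdxMP r (conjMP L r l) (L - 1 - c) b a < r),
        wlam ⟨rowIdxMP r l c a b, h1⟩ = ⟨rowIdxMP r (conjMP L r l) (L - 1 - c) b a, h2⟩)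
    (hwi : ∀ c a b, b < l c a →
      ∀ (h1 : rowIdxMP r l c a b < r) (h2 : asum r l c + psum (conjC r (l c)) b + a < r),
        wi c ⟨rowIdxMP r l c a b, h1⟩ = ⟨asum r l c + psum (conjC r (l c)) b + a, h2⟩)
    {p : Fin r} {c : ℕ} (hc1 : asum r l c ≤ p) (hc2 : p < asum r l (c + 1)) :
    ∃ x < psum (l c) r,
      (wi c p : ℕ) = asum r l c + x ∧ (wlam p : ℕ) = r - asum r l (c + 1) + x := by
  have hcL : c < L := by
    by_contra hcL
    have := psum_monotone (fun c => psum (l c) r) (not_lt.1 hcL)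
    have := hmp.asum_self
    rw [asum_eq_psum] at hc1 this
    omega
  obtain ⟨a, b, hb, hp⟩ := exists_rowIdxMP_eq hc1 hc2
  have hx := hmp.psum_conjC_add_lt hb
  have hle := hmp.asum_le (c + 1)
  have hsucc := asum_succ r l c
  have hr : rowIdxMP r l c a b < r := hp ▸ p.2
  rw [show p = ⟨_, hr⟩ from Fin.ext hp]
  refine ⟨_, hx, ?_, ?_⟩
  · rw [hwi c a b hb hr (by omega)]
    exact add_assoc _ _ _
  · rw [hwlam c a b hb hr (by rw [hmp.rowIdxMP_conjMP hcL]; omega)]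
    exact hmp.rowIdxMP_conjMP hcL a b

end IsMultipartitionOf

/-- Permutations act on the left, so the paper's `w_λ = w_{(1)} ⋯ w_{(ℓ)} · w_{[λ]}` reads
`wlam = wb * wi (L-1) * ⋯ * wi 0`; components are indexed from `0`. -/
theorem wlambda_block_factorization (L r : ℕ) (l : ℕ → ℕ → ℕ)
    (hmp : IsMultipartitionOf L r l)
    (wb wlam : Equiv.Perm (Fin r))
    (hwb : ∀ (i : ℕ) (p : Fin r), asum r l i ≤ (p : ℕ) → (p : ℕ) < asum r l (i + 1) →
      (wb p : ℕ) = r - asum r l (i + 1) + ((p : ℕ) - asum r l i))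
    (hwlam : ∀ c a b, b < l c a →
      ∀ (h1 : rowIdxMP r l c a b < r) (h2 : rowIdxMP r (conjMP L r l) (L - 1 - c) b a < r),
        wlam ⟨rowIdxMP r l c a b, h1⟩ = ⟨rowIdxMP r (conjMP L r l) (L - 1 - c) b a, h2⟩)
    (wi : ℕ → Equiv.Perm (Fin r))
    (hwi1 : ∀ c a b, b < l c a →
      ∀ (h1 : rowIdxMP r l c a b < r) (h2 : asum r l c + psum (conjC r (l c)) b + a < r),
        wi c ⟨rowIdxMP r l c a b, h1⟩ = ⟨asum r l c + psum (conjC r (l c)) b + a, h2⟩)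
    (hwi2 : ∀ (c : ℕ) (p : Fin r),
      ((p : ℕ) < asum r l c ∨ asum r l (c + 1) ≤ (p : ℕ)) → wi c p = p) :
    wlam = wb * ((List.range L).reverse.map wi).prod ∧
    len r wlam = (∑ c ∈ Finset.range L, len r (wi c)) + len r wb := by
  set blk : Fin r → ℕ := fun p => blockOf (fun c => psum (l c) r) L p
  have hbound : ∀ p : Fin r, (p : ℕ) < psum (fun c => psum (l c) r) L := fun p => by
    rw [← asum_eq_psum, hmp.asum_self]; exact p.2
  have hblk_eq :
      ∀ (p : Fin r) c, blk p = c ↔ asum r l c ≤ p ∧ (p : ℕ) < asum r l (c + 1) :=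
    fun p _ => blockOf_eq_iff (hbound p)
  have hmem : ∀ p : Fin r, asum r l (blk p) ≤ p ∧ (p : ℕ) < asum r l (blk p + 1) :=
    fun p => (hblk_eq p _).1 rfl
  have hcell : ∀ p : Fin r, ∃ x < psum (l (blk p)) r,
      (wi (blk p) p : ℕ) = asum r l (blk p) + x ∧
        (wlam p : ℕ) = r - asum r l (blk p + 1) + x :=
    fun p => hmp.exists_colPos_of_mem_block hwlam hwi1 (hmem p).1 (hmem p).2
  have hfix : ∀ c p, blk p ≠ c → wi c p = p := fun c p hc =>
    hwi2 c p (by rw [ne_eq, hblk_eq] at hc; omega)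
  have hτ : ∀ c p, blk (wi c p) = blk p := by
    intro c p
    by_cases hc : blk p = c
    · obtain ⟨x, hx, hwi, -⟩ := hcell p
      rw [hc] at hx hwi ⊢
      rw [hblk_eq, asum_succ]
      omega
    · rw [hfix c p hc]
  have hwb' : ∀ p, (wb p : ℕ) = r - asum r l (blk p + 1) + (p - asum r l (blk p)) :=
    fun p => hwb _ p (hmem p).1 (hmem p).2
  refine eq_mul_prod_and_len_of_blockwise (fun _ _ h => blockOf_monotone _ L h)
    (fun p => blockOf_lt (hbound p)) hτ hfix
    (fun _ _ => lt_iff_blockOf_ne_of_blockReversal hmp.asum_self hwb') fun p => Fin.ext ?_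
  obtain ⟨x, hx, hwi, hwl⟩ := hcell p
  rw [hwl, hwb', hτ, hwi]
  omega
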